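/- arXiv:2110.03376 — 6 statements merged into one kernel-verified Lean document; each statement's English description precedes it below -/
import Mathlib

section
/- Let H : ℝ² × ℝ² → ℝ be C¹ and let g : ℝ² → ℝ be C¹ with g(q) > 0 for all q. Let (q,p) : I → ℝ² × ℝ² be a C¹ solution of Hamilton's equations for Ĥ(q,p) := g(q)·H(q,p), i.e. q'(t) = g(q(t))·∇_p H(q(t),p(t)) and p'(t) = −g(q(t))·∇_q H(q(t),p(t)) − H(q(t),p(t))·∇g(q(t)) for all t ∈ I, and suppose H(q(t₀),p(t₀)) = 0 for some t₀ ∈ I. Then H(q(t),p(t)) = 0 for all t ∈ I; moreover, setting τ(t) := ∫_{t₀}^t g(q(u)) du and letting σ be the inverse of the strictly increasing function τ, the reparametrized curve s ↦ (q(σ(s)), p(σ(s))) solves Hamilton's equations for H: (q∘σ)'(s) = ∇_p H(q(σ(s)),p(σ(s))) and (p∘σ)'(s) = −∇_q H(q(σ(s)),p(σ(s))). -/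
/-- Gradient of a function on ℝ² (componentwise partial derivatives). -/
noncomputable def grad2 (F : ℝ × ℝ → ℝ) (x : ℝ × ℝ) : ℝ × ℝ :=
  (deriv (fun u => F (u, x.2)) x.1, deriv (fun u => F (x.1, u)) x.2)

/-- Gradient in the `q`-variables of a Hamiltonian on ℝ² × ℝ². -/
noncomputable def gradQ (H : (ℝ × ℝ) × (ℝ × ℝ) → ℝ) (x : (ℝ × ℝ) × (ℝ × ℝ)) : ℝ × ℝ :=
  grad2 (fun q => H (q, x.2)) x.1

/-- Gradient in the `p`-variables of a Hamiltonian on ℝ² × ℝ². -/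
noncomputable def gradP (H : (ℝ × ℝ) × (ℝ × ℝ) → ℝ) (x : (ℝ × ℝ) × (ℝ × ℝ)) : ℝ × ℝ :=
  grad2 (fun p => H (x.1, p)) x.2

/-! Along a solution for `g·H` the energy `E t = H (q t, p t)` obeys the linear equation
`E' = -⟨∇g(q), ∇ₚH⟩ E`, so by uniqueness for linear ODEs it vanishes on all of `I` once it
vanishes at `t₀`. On `{H = 0}` the equations for `g·H` are those for `H` multiplied by
`g(q) = τ'`, and the chain rule with `σ' = 1 / τ'` removes this factor. -/

open Set Filter Topology

theorem Set.OrdConnected.ftcFilter {I : Set ℝ} (hI : I.OrdConnected) {t : ℝ} (ht : t ∈ I) :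
    intervalIntegral.FTCFilter t (𝓝[I] t) (𝓝[I] t) where
  toTendstoIxxClass := by
    have := hI
    have : TendstoIxxClass Icc (𝓝[I] t) (𝓝[I] t) := tendstoIxxClass_inf
    exact tendstoIxxClass_of_subset fun _ _ => Ioc_subset_Icc_self
  pure_le := pure_le_nhdsWithin ht
  le_nhds := inf_le_left
  meas_gen := hI.measurableSet.nhdsWithin_isMeasurablyGenerated t

theorem ContinuousOn.hasDerivWithinAt_integral {E : Type*} [NormedAddCommGroup E]
    [NormedSpace ℝ E] [CompleteSpace E] {f : ℝ → E} {I : Set ℝ} (hI : I.OrdConnected)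
    (hf : ContinuousOn f I) {a t : ℝ} (ha : a ∈ I) (ht : t ∈ I) :
    HasDerivWithinAt (fun u => ∫ x in a..u, f x) (f t) I t :=
  have := hI.ftcFilter ht
  intervalIntegral.integral_hasDerivWithinAt_right
    ((hf.mono (hI.uIcc_subset ha ht)).intervalIntegrable)
    (hf.stronglyMeasurableAtFilter_nhdsWithin hI.measurableSet t) (hf t ht)

theorem HasDerivWithinAt.of_local_left_inverse {𝕜 : Type*} [NontriviallyNormedField 𝕜]
    {f g : 𝕜 → 𝕜} {f' a : 𝕜} {s t : Set 𝕜}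
    (hg : Tendsto g (𝓝[s] a) (𝓝[t] (g a))) (hf : HasDerivWithinAt f f' t (g a)) (hf' : f' ≠ 0)
    (ha : a ∈ s) (hfg : ∀ᶠ x in 𝓝[s] a, f (g x) = x) : HasDerivWithinAt g f'⁻¹ s a :=
  HasFDerivWithinAt.of_local_left_inverse
    (f' := ContinuousLinearEquiv.unitsEquivAut 𝕜 (Units.mk0 f' hf')) hg hf ha hfg

theorem StrictMonoOn.continuousOn_image_of_leftInvOn {τ σ : ℝ → ℝ} {I : Set ℝ}
    (hI : I.OrdConnected) (hτ : StrictMonoOn τ I) (hτc : ContinuousOn τ I)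
    (hσ : LeftInvOn σ τ I) : ContinuousOn σ (τ '' I) := by
  have := hI
  have : (τ '' I).OrdConnected := (hI.isPreconnected.image τ hτc).ordConnected
  let e := hτ.orderIso τ I
  rw [continuousOn_iff_continuous_domRestrict]
  convert continuous_subtype_val.comp e.symm.continuous using 1
  funext s
  have : τ (e.symm s) = s := congrArg Subtype.val (e.apply_symm_apply s)
  change σ s = e.symm s
  conv_lhs => rw [← this]
  exact hσ (e.symm s).2

theorem StrictMonoOn.hasDerivWithinAt_image_of_leftInvOn {τ σ : ℝ → ℝ} {I : Set ℝ}
    (hI : I.OrdConnected) (hτ : StrictMonoOn τ I) (hτc : ContinuousOn τ I)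
    (hσ : LeftInvOn σ τ I) {t τ' : ℝ} (ht : t ∈ I) (hτt : HasDerivWithinAt τ τ' I t)
    (hτ' : τ' ≠ 0) : HasDerivWithinAt σ τ'⁻¹ (τ '' I) (τ t) := by
  have hσt : σ (τ t) = t := hσ ht
  refine .of_local_left_inverse ?_ (hσt ▸ hτt) hτ' (mem_image_of_mem τ ht) ?_
  · exact (hτ.continuousOn_image_of_leftInvOn hI hτc hσ _ (mem_image_of_mem τ ht))
      |>.tendsto_nhdsWithin (hσ.mapsTo (surjOn_image τ I))
  · filter_upwards [self_mem_nhdsWithin] with s ⟨u, hu, hus⟩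
    rw [← hus, hσ hu]

theorem Set.OrdConnected.eqOn_zero_of_hasDerivWithinAt_smul {F : Type*} [NormedAddCommGroup F]
    [NormedSpace ℝ F] {E : ℝ → F} {c : ℝ → ℝ} {I : Set ℝ} (hI : I.OrdConnected)
    (hc : ContinuousOn c I) (hE : ∀ t ∈ I, HasDerivWithinAt E (c t • E t) I t) {t₀ : ℝ}
    (ht₀ : t₀ ∈ I) (h₀ : E t₀ = 0) : EqOn E 0 I := by
  intro t ht
  have hsub : uIcc t₀ t ⊆ I := hI.uIcc_subset ht₀ ht
  obtain ⟨C, hC⟩ := isCompact_uIcc.exists_bound_of_continuousOn (hc.mono hsub)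
  have hLip : ∀ s ∈ uIcc t₀ t, LipschitzOnWith C.toNNReal (fun x : F => c s • x) univ :=
    fun s hs => ((lipschitzWith_smul (c s)).weaken (by
      rw [← NNReal.coe_le_coe, coe_nnnorm, Real.coe_toNNReal']
      exact (hC s hs).trans (le_max_left _ _))).lipschitzOnWith
  have hEc : ContinuousOn E (uIcc t₀ t) := fun s hs => (hE s (hsub hs)).continuousWithinAt.mono hsub
  have hzero_solves : ∀ s, HasDerivWithinAt (0 : ℝ → F) (c s • (0 : ℝ → F) s) univ s :=
    fun s => by simp
  rcases le_total t₀ t with h | h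
  · rw [uIcc_of_le h] at hsub hLip hEc
    exact ODE_solution_unique_of_mem_Icc_right (v := fun s x => c s • x) (s := fun _ => univ)
      (fun s hs => hLip s (Ico_subset_Icc_self hs)) hEc
      (fun s hs => (hE s (hsub (Ico_subset_Icc_self hs))).mono_of_mem_nhdsWithin
        (mem_of_superset (Icc_mem_nhdsGE hs.2) (Icc_subset_Icc_left hs.1 |>.trans hsub)))
      (fun _ _ => trivial) continuousOn_const (fun s _ => (hzero_solves s).mono (subset_univ _))
      (fun _ _ => trivial) h₀ ⟨h, le_rfl⟩
  · rw [uIcc_of_ge h] at hsub hLip hEc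
    exact ODE_solution_unique_of_mem_Icc_left (v := fun s x => c s • x) (s := fun _ => univ)
      (fun s hs => hLip s (Ioc_subset_Icc_self hs)) hEc
      (fun s hs => (hE s (hsub (Ioc_subset_Icc_self hs))).mono_of_mem_nhdsWithin
        (mem_of_superset (Icc_mem_nhdsLE hs.1) (Icc_subset_Icc_right hs.2 |>.trans hsub)))
      (fun _ _ => trivial) continuousOn_const (fun s _ => (hzero_solves s).mono (subset_univ _))
      (fun _ _ => trivial) h₀ ⟨le_rfl, h⟩

theorem grad2_dot_eq_fderiv {g : ℝ × ℝ → ℝ} {x : ℝ × ℝ} (hg : DifferentiableAt ℝ g x)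
    (v : ℝ × ℝ) : (grad2 g x).1 * v.1 + (grad2 g x).2 * v.2 = fderiv ℝ g x v := by
  have h₁ : HasDerivAt (fun u => g (u, x.2)) (fderiv ℝ g x (1, 0)) x.1 :=
    hg.hasFDerivAt.comp_hasDerivAt x.1 ((hasDerivAt_id x.1).prodMk (hasDerivAt_const _ _))
  have h₂ : HasDerivAt (fun u => g (x.1, u)) (fderiv ℝ g x (0, 1)) x.2 :=
    hg.hasFDerivAt.comp_hasDerivAt x.2 ((hasDerivAt_const _ _).prodMk (hasDerivAt_id x.2))
  have hv : v = v.1 • ((1 : ℝ), (0 : ℝ)) + v.2 • ((0 : ℝ), (1 : ℝ)) := by ext <;> simp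
  rw [grad2, h₁.deriv, h₂.deriv]
  conv_rhs => rw [hv]
  simp only [map_add, map_smul, smul_eq_mul]
  ring

theorem gradQ_dot_add_gradP_dot_eq_fderiv {H : (ℝ × ℝ) × (ℝ × ℝ) → ℝ} {x : (ℝ × ℝ) × (ℝ × ℝ)}
    (hH : DifferentiableAt ℝ H x) (v : (ℝ × ℝ) × (ℝ × ℝ)) :
    (gradQ H x).1 * v.1.1 + (gradQ H x).2 * v.1.2 + ((gradP H x).1 * v.2.1 + (gradP H x).2 * v.2.2)
      = fderiv ℝ H x v := by
  have hQ : HasFDerivAt (fun q => H (q, x.2)) ((fderiv ℝ H x).comp (.inl ℝ _ _)) x.1 :=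
    hH.hasFDerivAt.comp x.1 (hasFDerivAt_prodMk_left x.1 x.2)
  have hP : HasFDerivAt (fun p => H (x.1, p)) ((fderiv ℝ H x).comp (.inr ℝ _ _)) x.2 :=
    hH.hasFDerivAt.comp x.2 (hasFDerivAt_prodMk_right x.1 x.2)
  rw [gradQ, gradP, grad2_dot_eq_fderiv hQ.differentiableAt,
    grad2_dot_eq_fderiv hP.differentiableAt, hQ.fderiv, hP.fderiv]
  simp [← map_add]

theorem ContDiff.continuous_gradP {H : (ℝ × ℝ) × (ℝ × ℝ) → ℝ} (hH : ContDiff ℝ 1 H) :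
    Continuous (gradP H) := by
  have hform : gradP H = fun x => (fderiv ℝ H x (0, (1, 0)), fderiv ℝ H x (0, (0, 1))) := by
    funext x
    have hx := hH.differentiable one_ne_zero x
    ext
    · simpa using gradQ_dot_add_gradP_dot_eq_fderiv hx (0, (1, 0))
    · simpa using gradQ_dot_add_gradP_dot_eq_fderiv hx (0, (0, 1))
  have hd := hH.continuous_fderiv one_ne_zero
  rw [hform]
  exact (hd.clm_apply continuous_const).prodMk (hd.clm_apply continuous_const)

theorem hasDerivWithinAt_energy_of_rescaled_hamiltonian {H : (ℝ × ℝ) × (ℝ × ℝ) → ℝ} {g : ℝ × ℝ → ℝ}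
    {q p : ℝ → ℝ × ℝ} {I : Set ℝ} {t : ℝ} (hH : DifferentiableAt ℝ H (q t, p t))
    (hg : DifferentiableAt ℝ g (q t))
    (hq : HasDerivWithinAt q (g (q t) • gradP H (q t, p t)) I t)
    (hp : HasDerivWithinAt p
      ((-g (q t)) • gradQ H (q t, p t) - H (q t, p t) • grad2 g (q t)) I t) :
    HasDerivWithinAt (fun s => H (q s, p s))
      (-fderiv ℝ g (q t) (gradP H (q t, p t)) • H (q t, p t)) I t := by
  refine (hH.hasFDerivAt.comp_hasDerivWithinAt t (hq.prodMk hp)).congr_deriv ?_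
  rw [← gradQ_dot_add_gradP_dot_eq_fderiv hH, ← grad2_dot_eq_fderiv hg]
  simp only [Prod.smul_fst, Prod.smul_snd, Prod.fst_sub, Prod.snd_sub, smul_eq_mul]
  ring

/-- Multiplying a Hamiltonian `H` by a positive function `g(q)` of the positions only
reparametrizes the flow on the zero-energy hypersurface: a solution of Hamilton's
equations for `Ĥ = g·H` starting with `H = 0` stays on `{H = 0}`, and after the time
change `τ(t) = ∫_{t₀}^t g(q(u)) du`, with inverse `σ`, it solves Hamilton's equations
for `H`. -/
theorem stmt_1 (H : (ℝ × ℝ) × (ℝ × ℝ) → ℝ) (g : ℝ × ℝ → ℝ)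
    (hH : ContDiff ℝ 1 H) (hgC : ContDiff ℝ 1 g) (hgpos : ∀ x, 0 < g x)
    (I : Set ℝ) (hI : Convex ℝ I) (t₀ : ℝ) (ht₀ : t₀ ∈ I)
    (q p : ℝ → ℝ × ℝ)
    (hq : ∀ t ∈ I, HasDerivWithinAt q (g (q t) • gradP H (q t, p t)) I t)
    (hp : ∀ t ∈ I, HasDerivWithinAt p
      ((-g (q t)) • gradQ H (q t, p t) - H (q t, p t) • grad2 g (q t)) I t)
    (hE : H (q t₀, p t₀) = 0)
    (τ : ℝ → ℝ) (hτ : τ = fun t => ∫ u in t₀..t, g (q u))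
    (σ : ℝ → ℝ) (hσ : ∀ t ∈ I, σ (τ t) = t) :
    (∀ t ∈ I, H (q t, p t) = 0) ∧
    (∀ t ∈ I,
      HasDerivWithinAt (fun s => q (σ s)) (gradP H (q t, p t)) (τ '' I) (τ t) ∧
      HasDerivWithinAt (fun s => p (σ s)) (-gradQ H (q t, p t)) (τ '' I) (τ t)) := by
  have hqc : ContinuousOn q I := fun t ht => (hq t ht).continuousWithinAt
  have hpc : ContinuousOn p I := fun t ht => (hp t ht).continuousWithinAt
  have hc : ContinuousOn (fun t => -fderiv ℝ g (q t) (gradP H (q t, p t))) I :=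
    (((hgC.continuous_fderiv one_ne_zero).comp_continuousOn hqc).clm_apply
      (hH.continuous_gradP.comp_continuousOn (hqc.prodMk hpc))).neg
  have hzero : ∀ t ∈ I, H (q t, p t) = 0 :=
    hI.ordConnected.eqOn_zero_of_hasDerivWithinAt_smul (E := fun t => H (q t, p t)) hc
      (fun t ht => hasDerivWithinAt_energy_of_rescaled_hamiltonian (hH.differentiable one_ne_zero _)
        (hgC.differentiable one_ne_zero _) (hq t ht) (hp t ht)) ht₀ hE
  refine ⟨hzero, fun t ht => ?_⟩
  have hτd : ∀ u ∈ I, HasDerivWithinAt τ (g (q u)) I u := fun u hu =>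
    hτ ▸ (hgC.continuous.comp_continuousOn hqc).hasDerivWithinAt_integral hI.ordConnected ht₀ hu
  have hτc : ContinuousOn τ I := fun u hu => (hτd u hu).continuousWithinAt
  have hτm : StrictMonoOn τ I := strictMonoOn_of_hasDerivWithinAt_pos hI hτc
    (fun u hu => (hτd u (interior_subset hu)).mono interior_subset) (fun _ _ => hgpos _)
  have hσd : HasDerivWithinAt σ (g (q t))⁻¹ (τ '' I) (τ t) :=
    hτm.hasDerivWithinAt_image_of_leftInvOn hI.ordConnected hτc hσ ht (hτd t ht) (hgpos _).ne'
  have hmaps : MapsTo σ (τ '' I) I := LeftInvOn.mapsTo hσ (surjOn_image τ I)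
  constructor
  · have := (hq t ht).scomp_of_eq (τ t) hσd hmaps (hσ t ht).symm
    rwa [smul_smul, inv_mul_cancel₀ (hgpos _).ne', one_smul] at this
  · have := (hp t ht).scomp_of_eq (τ t) hσd hmaps (hσ t ht).symm
    rwa [hzero t ht, zero_smul, sub_zero, smul_smul, mul_neg, inv_mul_cancel₀ (hgpos _).ne',
      neg_smul, one_smul] at this
end

section
/- Let f ∈ ℝ and a, b > 0, and define G(z,w) := (a² − b²)·(2f·z₁² + w₁²) + (z₁w₂ − z₂w₁)² for z, w ∈ ℝ². Then: (i) for every twice-differentiable curve z : I → ℝ² satisfying the Hooke equation z''(t) = −2f·z(t), the function t ↦ G(z(t), z'(t)) is constant; (ii) for every point z on the centered ellipse {z : z₁²/a² + z₂²/b² = 1}, setting n := (z₁/a², z₂/b²) and w' := w − 2(⟨w,n⟩/‖n‖²)·n for any w ∈ ℝ², one has G(z, w') = G(z, w). Hence G is a first integral of the Hooke billiard in the centered ellipse. -/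
/-!
Along a Hooke trajectory both the energy `2f·z₁² + w₁²` of the first coordinate and the angular
momentum `z₁w₂ − z₂w₁` are conserved, hence so is `G` for every value of the coefficient `a² − b²`.
At a point `z = (a²u, b²v)` of the ellipse, with normal `n = (u, v)` and `a²u² + b²v² = 1`, the
reflection `w ↦ w − k n` changes the angular momentum by `k (a² − b²) u v`; with this coefficient
the two changes of `G` cancel exactly when `k (u² + v²) = 2 ⟨w, n⟩`.
-/

/-- The first integral `G(z,w) = c·(2f·z₁² + w₁²) + (z₁w₂ − z₂w₁)²` of Hooke billiards. -/
def hookeG (f c : ℝ) (z w : ℝ × ℝ) : ℝ :=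
  c * (2 * f * z.1 ^ 2 + w.1 ^ 2) + (z.1 * w.2 - z.2 * w.1) ^ 2

theorem HasDerivWithinAt.fst {𝕜 E F : Type*} [NontriviallyNormedField 𝕜]
    [NormedAddCommGroup E] [NormedSpace 𝕜 E] [NormedAddCommGroup F] [NormedSpace 𝕜 F]
    {p : 𝕜 → E × F} {p' : E × F} {s : Set 𝕜} {t : 𝕜} (h : HasDerivWithinAt p p' s t) :
    HasDerivWithinAt (fun u => (p u).1) p'.1 s t := by
  simpa using h.hasFDerivWithinAt.fst.hasDerivWithinAt

theorem HasDerivWithinAt.snd {𝕜 E F : Type*} [NontriviallyNormedField 𝕜]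
    [NormedAddCommGroup E] [NormedSpace 𝕜 E] [NormedAddCommGroup F] [NormedSpace 𝕜 F]
    {p : 𝕜 → E × F} {p' : E × F} {s : Set 𝕜} {t : 𝕜} (h : HasDerivWithinAt p p' s t) :
    HasDerivWithinAt (fun u => (p u).2) p'.2 s t := by
  simpa using h.hasFDerivWithinAt.snd.hasDerivWithinAt

theorem Convex.eq_of_hasDerivWithinAt_zero {E : Type*} [NormedAddCommGroup E] [NormedSpace ℝ E]
    {g : ℝ → E} {s : Set ℝ} (hs : Convex ℝ s) (hg : ∀ t ∈ s, HasDerivWithinAt g 0 s t)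
    {t t' : ℝ} (ht : t ∈ s) (ht' : t' ∈ s) : g t = g t' := by
  have := hs.norm_image_sub_le_of_norm_hasDerivWithin_le hg (fun _ _ => norm_zero.le) ht ht'
  rw [zero_mul, norm_le_zero_iff, sub_eq_zero] at this
  exact this.symm

theorem hasDerivWithinAt_hookeG_of_hooke {f c : ℝ} {z v : ℝ → ℝ × ℝ} {s : Set ℝ} {t : ℝ}
    (hz : HasDerivWithinAt z (v t) s t) (hv : HasDerivWithinAt v ((-(2 * f)) • z t) s t) :
    HasDerivWithinAt (fun u => hookeG f c (z u) (v u)) 0 s t := by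
  unfold hookeG
  refine ((((hz.fst.pow 2).const_mul (2 * f)).add (hv.fst.pow 2)).const_mul c |>.add
    (((hz.fst.mul hv.snd).sub (hz.snd.mul hv.fst)).pow 2)).congr_deriv ?_
  simp only [Prod.smul_fst, Prod.smul_snd, smul_eq_mul, Pi.mul_apply, Pi.sub_apply]
  ring

-- Holds also for `n = 0`, where both sides vanish because of the junk value `x / 0 = 0`.
theorem dot_div_normSq_mul_normSq (p n : ℝ × ℝ) :
    (p.1 * n.1 + p.2 * n.2) / (n.1 ^ 2 + n.2 ^ 2) * (n.1 ^ 2 + n.2 ^ 2) = p.1 * n.1 + p.2 * n.2 := by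
  refine div_mul_cancel_of_imp fun h0 => ?_
  obtain ⟨h1, h2⟩ := (add_eq_zero_iff_of_nonneg (sq_nonneg _) (sq_nonneg _)).mp h0
  simp [pow_eq_zero_iff two_ne_zero |>.mp h1, pow_eq_zero_iff two_ne_zero |>.mp h2]

theorem hookeG_sub_smul_ellipse_normal {f a b u v k : ℝ} {z : ℝ × ℝ} (w : ℝ × ℝ)
    (hz₁ : z.1 = a ^ 2 * u) (hz₂ : z.2 = b ^ 2 * v) (hon : a ^ 2 * u ^ 2 + b ^ 2 * v ^ 2 = 1)
    (hk : k * (u ^ 2 + v ^ 2) = 2 * (w.1 * u + w.2 * v)) :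
    hookeG f (a ^ 2 - b ^ 2) z (w - k • (u, v)) = hookeG f (a ^ 2 - b ^ 2) z w := by
  simp only [hookeG, hz₁, hz₂, Prod.fst_sub, Prod.snd_sub, Prod.smul_mk, smul_eq_mul]
  linear_combination ((a ^ 2 - b ^ 2) * k * a ^ 2 * u ^ 2) * hk +
    ((a ^ 2 - b ^ 2) * k * u * (2 * w.1 - k * u)) * hon

/-- `G(z,w) = (a² − b²)(2f·z₁² + w₁²) + (z₁w₂ − z₂w₁)²` is a first integral of the
Hooke billiard in the centered ellipse `z₁²/a² + z₂²/b² = 1`: it is constant along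
solutions of `z'' = −2f·z` and invariant under elastic reflections at the ellipse. -/
theorem stmt_3 (f a b : ℝ) (ha : 0 < a) (hb : 0 < b) :
    (∀ I : Set ℝ, Convex ℝ I → ∀ z v : ℝ → ℝ × ℝ,
      (∀ t ∈ I, HasDerivWithinAt z (v t) I t) →
      (∀ t ∈ I, HasDerivWithinAt v ((-(2 * f)) • z t) I t) →
      ∀ t ∈ I, ∀ t' ∈ I,
        hookeG f (a ^ 2 - b ^ 2) (z t) (v t) = hookeG f (a ^ 2 - b ^ 2) (z t') (v t')) ∧
    (∀ z w : ℝ × ℝ, z.1 ^ 2 / a ^ 2 + z.2 ^ 2 / b ^ 2 = 1 →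
      ∀ n w' : ℝ × ℝ, n = (z.1 / a ^ 2, z.2 / b ^ 2) →
      w' = w - (2 * ((w.1 * n.1 + w.2 * n.2) / (n.1 ^ 2 + n.2 ^ 2))) • n →
      hookeG f (a ^ 2 - b ^ 2) z w' = hookeG f (a ^ 2 - b ^ 2) z w) := by
  refine ⟨fun I hI z v hz hv t ht t' ht' => hI.eq_of_hasDerivWithinAt_zero
    (fun s hs => hasDerivWithinAt_hookeG_of_hooke (hz s hs) (hv s hs)) ht ht', ?_⟩
  rintro z w hz n w' rfl rfl
  have hz₁ : z.1 = a ^ 2 * (z.1 / a ^ 2) := by field_simp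
  have hz₂ : z.2 = b ^ 2 * (z.2 / b ^ 2) := by field_simp
  have hon : a ^ 2 * (z.1 / a ^ 2) ^ 2 + b ^ 2 * (z.2 / b ^ 2) ^ 2 = 1 := by
    rw [← hz]; field_simp
  exact hookeG_sub_smul_ellipse_normal w hz₁ hz₂ hon
    (by rw [mul_assoc, dot_div_normSq_mul_normSq])
end

section
/- Let s, f, ã ∈ ℝ, let z ∈ ℝ² \ {0} and w ∈ ℝ², and define q₁ := z₁² − z₂², q₂ := 2z₁z₂, p₁ := (z₁w₁ − z₂w₂)/(z₁² + z₂²), p₂ := (z₁w₂ + z₂w₁)/(z₁² + z₂²). Then: (a) z₁w₂ − z₂w₁ = q₁p₂ − q₂p₁; (b) if the energy relation (p₁² + p₂²)/2 − s/√(q₁² + q₂²) + f = 0 holds, then 2ã·(2f·z₁² + w₁²) + (z₁w₂ − z₂w₁)² = (p₁q₂ − p₂q₁)² − 2ã·((q₁p₂ − q₂p₁)·p₂ − s·q₁/√(q₁² + q₂²)) + 2ã·s. In other words, under the complex square map the Hooke first integral 2ã(2fz₁² + w₁²) + (z₁w₂ − z₂w₁)² is transformed, up to an additive constant, into the Gallavotti–Jauslin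 first integral A(p,q) = (p₁q₂ − p₂q₁)² − 2ã((q₁p₂ − q₂p₁)p₂ − sq₁/√(q₁²+q₂²)) on the (−f)-energy hypersurface of the Kepler problem with force function s/|q|. -/
/-!
In complex notation `q = z²` and `p = w z / |z|²`, so `|q| = |z|²`, `|p|² = |w|² / |z|²` and
`Im(q̄ p) = Im(z̄ w)`: the angular momentum is preserved. Multiplying the Kepler energy relation by
`|z|²` turns it into the Hooke energy relation `|w|²/2 + f|z|² = s` (Levi-Civita regularisation).
On that shell `s (1 + q₁/|q|) = 2 s z₁²/|z|² = z₁² |w|²/|z|² + 2 f z₁²`, and this is exactly what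
is needed to match `2 f z₁² + w₁²` with `s (1 + q₁/|q|) − (z₁w₂ − z₂w₁) p₂`.
-/

theorem sqrt_sq_sub_sq_sq_add_two_mul_sq (a b : ℝ) :
    √((a ^ 2 - b ^ 2) ^ 2 + (2 * a * b) ^ 2) = a ^ 2 + b ^ 2 := by
  rw [show (a ^ 2 - b ^ 2) ^ 2 + (2 * a * b) ^ 2 = (a ^ 2 + b ^ 2) ^ 2 by ring]
  exact Real.sqrt_sq (by positivity)

theorem Prod.fst_sq_add_snd_sq_pos {z : ℝ × ℝ} (hz : z ≠ 0) : 0 < z.1 ^ 2 + z.2 ^ 2 := by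
  obtain ⟨a, b⟩ := z
  have hab : a ≠ 0 ∨ b ≠ 0 := not_and_or.mp fun h => hz (Prod.ext h.1 h.2)
  rcases hab with h | h <;> positivity

section LeviCivita

variable {z₁ z₂ w₁ w₂ : ℝ}

theorem cross_eq_cross_sq_map (hz : z₁ ^ 2 + z₂ ^ 2 ≠ 0) :
    z₁ * w₂ - z₂ * w₁ =
      (z₁ ^ 2 - z₂ ^ 2) * ((z₁ * w₂ + z₂ * w₁) / (z₁ ^ 2 + z₂ ^ 2))
        - 2 * z₁ * z₂ * ((z₁ * w₁ - z₂ * w₂) / (z₁ ^ 2 + z₂ ^ 2)) := by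
  field_simp
  ring

theorem kepler_energy_iff_hooke_energy (s f : ℝ) (hz : z₁ ^ 2 + z₂ ^ 2 ≠ 0) :
    (((z₁ * w₁ - z₂ * w₂) / (z₁ ^ 2 + z₂ ^ 2)) ^ 2
        + ((z₁ * w₂ + z₂ * w₁) / (z₁ ^ 2 + z₂ ^ 2)) ^ 2) / 2 - s / (z₁ ^ 2 + z₂ ^ 2) + f = 0 ↔
      (w₁ ^ 2 + w₂ ^ 2) / 2 + f * (z₁ ^ 2 + z₂ ^ 2) = s := by
  rw [div_pow, div_pow, ← add_div, ← sq_add_sq_mul_sq_add_sq]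
  field_simp
  constructor <;> intro h <;> linarith

theorem hooke_integral_eq_of_hooke_energy {s f : ℝ} (hz : z₁ ^ 2 + z₂ ^ 2 ≠ 0)
    (h : (w₁ ^ 2 + w₂ ^ 2) / 2 + f * (z₁ ^ 2 + z₂ ^ 2) = s) :
    2 * f * z₁ ^ 2 + w₁ ^ 2 =
      -((z₁ * w₂ - z₂ * w₁) * ((z₁ * w₂ + z₂ * w₁) / (z₁ ^ 2 + z₂ ^ 2)))
        + s * (z₁ ^ 2 - z₂ ^ 2) / (z₁ ^ 2 + z₂ ^ 2) + s := by
  field_simp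
  linear_combination 2 * z₁ ^ 2 * h

end LeviCivita

/-- Under the complex square map `(z₁, z₂) ↦ (z₁² − z₂², 2z₁z₂)` with cotangent lift
`p = w·z/|z|²`, the angular momentum is preserved, and on the energy hypersurface
`|p|²/2 − s/|q| + f = 0` of the Kepler problem the Hooke first integral
`2aTilde(2f·z₁² + w₁²) + (z₁w₂ − z₂w₁)²` is transformed, up to the additive constant `2aTildes`,
into the Gallavotti–Jauslin first integral
`A(p,q) = (p₁q₂ − p₂q₁)² − 2aTilde((q₁p₂ − q₂p₁)p₂ − s·q₁/√(q₁²+q₂²))`. -/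
theorem stmt_7 (s f aTilde : ℝ) (z w : ℝ × ℝ) (hz : z ≠ 0)
    (q p : ℝ × ℝ)
    (hq : q = (z.1 ^ 2 - z.2 ^ 2, 2 * z.1 * z.2))
    (hp : p = ((z.1 * w.1 - z.2 * w.2) / (z.1 ^ 2 + z.2 ^ 2),
               (z.1 * w.2 + z.2 * w.1) / (z.1 ^ 2 + z.2 ^ 2))) :
    z.1 * w.2 - z.2 * w.1 = q.1 * p.2 - q.2 * p.1 ∧
    ((p.1 ^ 2 + p.2 ^ 2) / 2 - s / Real.sqrt (q.1 ^ 2 + q.2 ^ 2) + f = 0 →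
      2 * aTilde * (2 * f * z.1 ^ 2 + w.1 ^ 2) + (z.1 * w.2 - z.2 * w.1) ^ 2 =
        (p.1 * q.2 - p.2 * q.1) ^ 2
          - 2 * aTilde * ((q.1 * p.2 - q.2 * p.1) * p.2
              - s * q.1 / Real.sqrt (q.1 ^ 2 + q.2 ^ 2))
          + 2 * aTilde * s) := by
  have hr := (Prod.fst_sq_add_snd_sq_pos hz).ne'
  have hcross := cross_eq_cross_sq_map (w₁ := w.1) (w₂ := w.2) hr
  subst hq hp
  dsimp only
  rw [sqrt_sq_sub_sq_sq_add_two_mul_sq]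
  refine ⟨hcross, fun hkepler => ?_⟩
  have hhooke := (kepler_energy_iff_hooke_energy s f hr).mp hkepler
  rw [hooke_integral_eq_of_hooke_energy hr hhooke, hcross]
  ring
end

section
/- Let a, b > 0 and let S : ℝ² → ℝ², S(z₁,z₂) := (z₁² − z₂², 2z₁z₂), be the complex square map. Then the image under S of the centered ellipse {z : z₁²/a² + z₂²/b² = 1} equals the ellipse {q : (q₁ − (a²−b²)/2)²/((a²+b²)/2)² + q₂²/(ab)² = 1}, which has the origin as one of its foci. -/
/-!
Writing `z = x + iy`, the quartic equation of the image ellipse, pulled back along `z ↦ z²`,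
factors as `(x²/a² + y²/b² - 1) · (a²x² + b²y² + a²b²)` up to a positive constant. The second
factor never vanishes, so `z ↦ z²` (which is onto, ℂ being algebraically closed) pulls the image
ellipse back exactly to the given one. On that ellipse `|z²| = x² + y²` and
`|z² - (a² - b²)| = a² + b² - (x² + y²)`, so the focal distances of `z²` add up to `a² + b²`.
-/

theorem surjective_complexSq :
    Function.Surjective (fun z : ℝ × ℝ => (z.1 ^ 2 - z.2 ^ 2, 2 * z.1 * z.2)) := by
  rintro ⟨q₁, q₂⟩
  obtain ⟨w, hw⟩ := IsAlgClosed.exists_pow_nat_eq (⟨q₁, q₂⟩ : ℂ) two_pos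
  refine ⟨(w.re, w.im), ?_⟩
  have hre := congrArg Complex.re hw
  have him := congrArg Complex.im hw
  simp only [pow_two, Complex.mul_re, Complex.mul_im] at hre him
  ext <;> simp only <;> linarith

theorem focalEllipse_sq_sub_one_eq_mul {a b : ℝ} (ha : a ≠ 0) (hb : b ≠ 0) (x y : ℝ) :
    (x ^ 2 - y ^ 2 - (a ^ 2 - b ^ 2) / 2) ^ 2 / ((a ^ 2 + b ^ 2) / 2) ^ 2
        + (2 * x * y) ^ 2 / (a * b) ^ 2 - 1
      = (x ^ 2 / a ^ 2 + y ^ 2 / b ^ 2 - 1)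
        * ((a ^ 2 * x ^ 2 + b ^ 2 * y ^ 2 + a ^ 2 * b ^ 2) / ((a ^ 2 + b ^ 2) / 2) ^ 2) := by
  have hab : a ^ 2 + b ^ 2 ≠ 0 := by positivity
  field_simp
  ring

theorem sq_mem_focalEllipse_iff {a b : ℝ} (ha : a ≠ 0) (hb : b ≠ 0) (x y : ℝ) :
    (x ^ 2 - y ^ 2 - (a ^ 2 - b ^ 2) / 2) ^ 2 / ((a ^ 2 + b ^ 2) / 2) ^ 2
        + (2 * x * y) ^ 2 / (a * b) ^ 2 = 1
      ↔ x ^ 2 / a ^ 2 + y ^ 2 / b ^ 2 = 1 := by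
  have hpos : 0 < (a ^ 2 * x ^ 2 + b ^ 2 * y ^ 2 + a ^ 2 * b ^ 2) / ((a ^ 2 + b ^ 2) / 2) ^ 2 := by
    positivity
  rw [← sub_eq_zero, focalEllipse_sq_sub_one_eq_mul ha hb, mul_eq_zero, sub_eq_zero,
    or_iff_left hpos.ne']

theorem focalSum_sq_eq_of_mem_ellipse {a b x y : ℝ} (ha : a ≠ 0) (hb : b ≠ 0)
    (h : x ^ 2 / a ^ 2 + y ^ 2 / b ^ 2 = 1) :
    Real.sqrt ((x ^ 2 - y ^ 2) ^ 2 + (2 * x * y) ^ 2)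
      + Real.sqrt ((x ^ 2 - y ^ 2 - (a ^ 2 - b ^ 2)) ^ 2 + (2 * x * y) ^ 2) = a ^ 2 + b ^ 2 := by
  have hx : x ^ 2 ≤ a ^ 2 := by
    rw [← div_le_one (by positivity)]; linarith [div_nonneg (sq_nonneg y) (sq_nonneg b)]
  have hy : y ^ 2 ≤ b ^ 2 := by
    rw [← div_le_one (by positivity)]; linarith [div_nonneg (sq_nonneg x) (sq_nonneg a)]
  have h' : b ^ 2 * x ^ 2 + a ^ 2 * y ^ 2 = a ^ 2 * b ^ 2 := by
    field_simp at h; linarith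
  have hnear : (x ^ 2 - y ^ 2) ^ 2 + (2 * x * y) ^ 2 = (x ^ 2 + y ^ 2) ^ 2 := by ring
  have hfar : (x ^ 2 - y ^ 2 - (a ^ 2 - b ^ 2)) ^ 2 + (2 * x * y) ^ 2
      = (a ^ 2 + b ^ 2 - (x ^ 2 + y ^ 2)) ^ 2 := by
    linear_combination 4 * h'
  rw [hnear, hfar, Real.sqrt_sq (by positivity), Real.sqrt_sq (by linarith)]
  ring

/-- The complex square map `S(z₁,z₂) = (z₁² − z₂², 2z₁z₂)` maps the centered ellipse
`{z₁²/a² + z₂²/b² = 1}` onto the ellipse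
`{(q₁ − (a²−b²)/2)²/((a²+b²)/2)² + q₂²/(ab)² = 1}`, which has the origin as one of its
foci: its points q satisfy dist(q, 0) + dist(q, (a²−b², 0)) = a² + b². -/
theorem stmt_11 (a b : ℝ) (ha : 0 < a) (hb : 0 < b) (S : ℝ × ℝ → ℝ × ℝ)
    (hS : S = fun z => (z.1 ^ 2 - z.2 ^ 2, 2 * z.1 * z.2)) :
    S '' {z : ℝ × ℝ | z.1 ^ 2 / a ^ 2 + z.2 ^ 2 / b ^ 2 = 1} =
      {q : ℝ × ℝ |
        (q.1 - (a ^ 2 - b ^ 2) / 2) ^ 2 / ((a ^ 2 + b ^ 2) / 2) ^ 2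
          + q.2 ^ 2 / (a * b) ^ 2 = 1} ∧
    ∀ q ∈ S '' {z : ℝ × ℝ | z.1 ^ 2 / a ^ 2 + z.2 ^ 2 / b ^ 2 = 1},
      Real.sqrt (q.1 ^ 2 + q.2 ^ 2)
        + Real.sqrt ((q.1 - (a ^ 2 - b ^ 2)) ^ 2 + q.2 ^ 2) = a ^ 2 + b ^ 2 := by
  subst hS
  have hpreimage : (fun z : ℝ × ℝ => (z.1 ^ 2 - z.2 ^ 2, 2 * z.1 * z.2)) ⁻¹'
      {q : ℝ × ℝ | (q.1 - (a ^ 2 - b ^ 2) / 2) ^ 2 / ((a ^ 2 + b ^ 2) / 2) ^ 2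
          + q.2 ^ 2 / (a * b) ^ 2 = 1}
      = {z : ℝ × ℝ | z.1 ^ 2 / a ^ 2 + z.2 ^ 2 / b ^ 2 = 1} :=
    Set.ext fun z => sq_mem_focalEllipse_iff ha.ne' hb.ne' z.1 z.2
  refine ⟨by rw [← hpreimage, Set.image_preimage_eq _ surjective_complexSq], ?_⟩
  rintro _ ⟨z, hz, rfl⟩
  exact focalSum_sq_eq_of_mem_ellipse ha.ne' hb.ne' hz
end

section
/- Let a, b > 0 with a ≠ b and let S : ℝ² → ℝ², S(z₁,z₂) := (z₁² − z₂², 2z₁z₂), be the complex square map. Then the image under S of the union of the two confocal centered hyperbolae {z : z₁²/a² − z₂²/b² = 1} and {z : z₁²/b² − z₂²/a² = 1} equals the full hyperbola {q : (q₁ − (a²+b²)/2)²/((a²−b²)/2)² − q₂²/(ab)² = 1}, which has the origin as one of its foci; each of the two centered hyperbolae is mapped onto one branch of this focused hyperbola. -/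
/-!
For `z = (x, y)`, the equation of the focused hyperbola at `z²`, cleared of denominators, factors as
`4 (b²x² − a²y² − a²b²)(a²x² − b²y² − a²b²)`: the preimage of the focused hyperbola under squaring
is exactly the union of the two centered hyperbolae, and squaring is onto since every complex number
has a square root. On `x²/a² − y²/b² = 1` one has
`2b² (a² − b²)(x² − y² − (a² + b²)/2) = (a² − b²)² (2y² + b²) > 0`, which tells the two branches apart.

For the focal property: on `u²/A² − v²/B² = 1` with `f² = A² + B²`, the squared distances to
`(∓f, 0)` are the perfect squares `(fu/A ± A)²`, and `|fu/A| ≥ |A|`.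
-/

def sqMap (z : ℝ × ℝ) : ℝ × ℝ := (z.1 ^ 2 - z.2 ^ 2, 2 * z.1 * z.2)

def centeredHyperbola (a b : ℝ) : Set (ℝ × ℝ) := {z | z.1 ^ 2 / a ^ 2 - z.2 ^ 2 / b ^ 2 = 1}

def focusedHyperbola (a b : ℝ) : Set (ℝ × ℝ) :=
  {q | (q.1 - (a ^ 2 + b ^ 2) / 2) ^ 2 / ((a ^ 2 - b ^ 2) / 2) ^ 2 - q.2 ^ 2 / (a * b) ^ 2 = 1}

lemma sqMap_surjective : Function.Surjective sqMap := by
  intro q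
  obtain ⟨w, hw⟩ := IsAlgClosed.exists_pow_nat_eq (⟨q.1, q.2⟩ : ℂ) two_pos
  refine ⟨(w.re, w.im), Prod.ext ?_ ?_⟩
  · simpa [sqMap, sq] using congrArg Complex.re hw
  · have h := congrArg Complex.im hw
    simp only [sq, Complex.mul_im] at h
    simp only [sqMap]
    linarith

section

variable {a b : ℝ}

lemma mem_centeredHyperbola_iff (ha : a ≠ 0) (hb : b ≠ 0) {z : ℝ × ℝ} :
    z ∈ centeredHyperbola a b ↔ b ^ 2 * z.1 ^ 2 - a ^ 2 * z.2 ^ 2 - a ^ 2 * b ^ 2 = 0 := by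
  simp only [centeredHyperbola, Set.mem_ofPred_eq]
  rw [div_sub_div _ _ (pow_ne_zero 2 ha) (pow_ne_zero 2 hb), div_eq_one_iff_eq (by positivity)]
  constructor <;> intro h <;> linear_combination h

lemma mem_focusedHyperbola_iff (ha : a ≠ 0) (hb : b ≠ 0) (hab : a ^ 2 ≠ b ^ 2) {q : ℝ × ℝ} :
    q ∈ focusedHyperbola a b ↔
      a ^ 2 * b ^ 2 * (2 * q.1 - (a ^ 2 + b ^ 2)) ^ 2 - (a ^ 2 - b ^ 2) ^ 2 * q.2 ^ 2
        - (a ^ 2 - b ^ 2) ^ 2 * a ^ 2 * b ^ 2 = 0 := by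
  have hab' : a ^ 2 - b ^ 2 ≠ 0 := sub_ne_zero.2 hab
  simp only [focusedHyperbola, Set.mem_ofPred_eq]
  rw [div_sub_div _ _ (by positivity) (by positivity), div_eq_one_iff_eq (by positivity)]
  constructor
  · intro h; linear_combination 4 * h
  · intro h; linear_combination h / 4

lemma focusedHyperbola_comm : focusedHyperbola b a = focusedHyperbola a b := by
  ext q
  simp only [focusedHyperbola, Set.mem_ofPred_eq]
  ring_nf

lemma sqMap_mem_focusedHyperbola_iff (ha : a ≠ 0) (hb : b ≠ 0) (hab : a ^ 2 ≠ b ^ 2)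
    {z : ℝ × ℝ} :
    sqMap z ∈ focusedHyperbola a b ↔ z ∈ centeredHyperbola a b ∨ z ∈ centeredHyperbola b a := by
  have factor : a ^ 2 * b ^ 2 * (2 * (sqMap z).1 - (a ^ 2 + b ^ 2)) ^ 2
      - (a ^ 2 - b ^ 2) ^ 2 * (sqMap z).2 ^ 2 - (a ^ 2 - b ^ 2) ^ 2 * a ^ 2 * b ^ 2 =
      4 * ((b ^ 2 * z.1 ^ 2 - a ^ 2 * z.2 ^ 2 - a ^ 2 * b ^ 2)
        * (a ^ 2 * z.1 ^ 2 - b ^ 2 * z.2 ^ 2 - b ^ 2 * a ^ 2)) := by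
    simp only [sqMap]; ring
  rw [mem_focusedHyperbola_iff ha hb hab, mem_centeredHyperbola_iff ha hb,
    mem_centeredHyperbola_iff hb ha, factor, mul_eq_zero, or_iff_right (four_ne_zero' ℝ),
    mul_eq_zero]

lemma sign_pos_of_mem_centeredHyperbola (ha : a ≠ 0) (hb : b ≠ 0) (hab : a ^ 2 ≠ b ^ 2)
    {z : ℝ × ℝ} (hz : z ∈ centeredHyperbola a b) :
    0 < (a ^ 2 - b ^ 2) * ((sqMap z).1 - (a ^ 2 + b ^ 2) / 2) := by
  rw [mem_centeredHyperbola_iff ha hb] at hz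
  have key : (a ^ 2 - b ^ 2) * ((sqMap z).1 - (a ^ 2 + b ^ 2) / 2) * (2 * b ^ 2) =
      (a ^ 2 - b ^ 2) ^ 2 * (2 * z.2 ^ 2 + b ^ 2) := by
    simp only [sqMap]; linear_combination 2 * (a ^ 2 - b ^ 2) * hz
  have hab' : a ^ 2 - b ^ 2 ≠ 0 := sub_ne_zero.2 hab
  exact pos_of_mul_pos_left (key ▸ by positivity) (by positivity : (0 : ℝ) ≤ 2 * b ^ 2)

lemma image_sqMap_centeredHyperbola (ha : a ≠ 0) (hb : b ≠ 0) (hab : a ^ 2 ≠ b ^ 2) :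
    sqMap '' centeredHyperbola a b =
      {q ∈ focusedHyperbola a b | 0 < (a ^ 2 - b ^ 2) * (q.1 - (a ^ 2 + b ^ 2) / 2)} := by
  ext q
  constructor
  · rintro ⟨z, hz, rfl⟩
    exact ⟨(sqMap_mem_focusedHyperbola_iff ha hb hab).2 (.inl hz),
      sign_pos_of_mem_centeredHyperbola ha hb hab hz⟩
  · rintro ⟨hq, hsign⟩
    obtain ⟨z, rfl⟩ := sqMap_surjective q
    refine ⟨z, ((sqMap_mem_focusedHyperbola_iff ha hb hab).1 hq).resolve_right fun hz => ?_, rfl⟩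
    have := sign_pos_of_mem_centeredHyperbola hb ha hab.symm hz
    linarith

lemma image_sqMap_centeredHyperbola_swap (ha : a ≠ 0) (hb : b ≠ 0) (hab : a ^ 2 ≠ b ^ 2) :
    sqMap '' centeredHyperbola b a =
      {q ∈ focusedHyperbola a b | (a ^ 2 - b ^ 2) * (q.1 - (a ^ 2 + b ^ 2) / 2) < 0} := by
  rw [image_sqMap_centeredHyperbola hb ha hab.symm, focusedHyperbola_comm]
  ext q
  refine and_congr_right fun _ => ?_
  constructor <;> intro h <;> linarith

lemma sign_ne_zero_of_mem_focusedHyperbola (hab : a ^ 2 ≠ b ^ 2) {q : ℝ × ℝ}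
    (hq : q ∈ focusedHyperbola a b) : (a ^ 2 - b ^ 2) * (q.1 - (a ^ 2 + b ^ 2) / 2) ≠ 0 := by
  refine mul_ne_zero (sub_ne_zero.2 hab) fun hc => ?_
  simp only [focusedHyperbola, Set.mem_ofPred_eq, hc] at hq
  have : 0 ≤ q.2 ^ 2 / (a * b) ^ 2 := by positivity
  norm_num at hq
  linarith

lemma image_sqMap_union_centeredHyperbola (ha : a ≠ 0) (hb : b ≠ 0) (hab : a ^ 2 ≠ b ^ 2) :
    sqMap '' (centeredHyperbola a b ∪ centeredHyperbola b a) = focusedHyperbola a b := by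
  rw [Set.image_union, image_sqMap_centeredHyperbola ha hb hab,
    image_sqMap_centeredHyperbola_swap ha hb hab, ← Set.sep_or]
  exact Set.sep_eq_self_iff_mem_true.2 fun q hq =>
    (sign_ne_zero_of_mem_focusedHyperbola hab hq).lt_or_gt.symm

end

lemma abs_abs_add_sub_abs_sub {s A : ℝ} (h : A ^ 2 ≤ s ^ 2) : |(|s + A| - |s - A|)| = 2 * |A| := by
  have hprod : |s + A| * |s - A| = s ^ 2 - A ^ 2 := by
    rw [← abs_mul, abs_of_nonneg (by nlinarith)]; ring
  have hsq : (|s + A| - |s - A|) ^ 2 = (2 * A) ^ 2 := by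
    linear_combination sq_abs (s + A) + sq_abs (s - A) - 2 * hprod
  rw [← Real.sqrt_sq_eq_abs, hsq, Real.sqrt_sq_eq_abs, abs_mul, abs_two]

lemma abs_sqrt_sub_sqrt_of_hyperbola {A B f u v : ℝ} (hA : A ≠ 0) (hB : B ≠ 0)
    (hf : f ^ 2 = A ^ 2 + B ^ 2) (h : u ^ 2 / A ^ 2 - v ^ 2 / B ^ 2 = 1) :
    |√((u + f) ^ 2 + v ^ 2) - √((u - f) ^ 2 + v ^ 2)| = 2 * |A| := by
  have hv : v ^ 2 = B ^ 2 * (u ^ 2 / A ^ 2 - 1) := by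
    rw [← h]; field_simp; ring
  have hplus : (u + f) ^ 2 + v ^ 2 = (f * u / A + A) ^ 2 := by
    rw [hv]; field_simp; linear_combination (A ^ 2 - u ^ 2) * hf
  have hminus : (u - f) ^ 2 + v ^ 2 = (f * u / A - A) ^ 2 := by
    rw [hv]; field_simp; linear_combination (A ^ 2 - u ^ 2) * hf
  have hu : 1 ≤ u ^ 2 / A ^ 2 := by
    rw [← h]; linarith [div_nonneg (sq_nonneg v) (sq_nonneg B)]
  have hle : A ^ 2 ≤ (f * u / A) ^ 2 := by
    calc A ^ 2 = A ^ 2 * 1 := (mul_one _).symm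
      _ ≤ f ^ 2 * (u ^ 2 / A ^ 2) :=
        mul_le_mul (by rw [hf]; linarith [sq_nonneg B]) hu zero_le_one (sq_nonneg f)
      _ = (f * u / A) ^ 2 := by ring
  rw [hplus, hminus, Real.sqrt_sq_eq_abs, Real.sqrt_sq_eq_abs, abs_abs_add_sub_abs_sub hle]

lemma abs_sqrt_sub_sqrt_of_mem_focusedHyperbola {a b : ℝ} (ha : a ≠ 0) (hb : b ≠ 0)
    (hab : a ^ 2 ≠ b ^ 2) {q : ℝ × ℝ} (hq : q ∈ focusedHyperbola a b) :
    |√(q.1 ^ 2 + q.2 ^ 2) - √((q.1 - (a ^ 2 + b ^ 2)) ^ 2 + q.2 ^ 2)| = |a ^ 2 - b ^ 2| := by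
  have key := abs_sqrt_sub_sqrt_of_hyperbola (f := (a ^ 2 + b ^ 2) / 2)
    (div_ne_zero (sub_ne_zero.2 hab) two_ne_zero) (mul_ne_zero ha hb) (by ring) hq
  rw [abs_div, abs_two] at key
  convert key using 4 <;> ring

/-- The complex square map `S(z₁,z₂) = (z₁² − z₂², 2z₁z₂)` maps the union of the two
confocal centered hyperbolae `{z₁²/a² − z₂²/b² = 1}` and `{z₁²/b² − z₂²/a² = 1}`
onto the full hyperbola `{(q₁ − (a²+b²)/2)²/((a²−b²)/2)² − q₂²/(ab)² = 1}`, each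
centered hyperbola being mapped onto one branch of it; the image hyperbola has
the origin as one of its foci: its points satisfy
`|dist(q,0) − dist(q,(a²+b², 0))| = |a² − b²|`. -/
theorem stmt_12 (a b : ℝ) (ha : 0 < a) (hb : 0 < b) (hab : a ≠ b)
    (S : ℝ × ℝ → ℝ × ℝ)
    (hS : S = fun z => (z.1 ^ 2 - z.2 ^ 2, 2 * z.1 * z.2))
    (Hfoc : Set (ℝ × ℝ))
    (hHfoc : Hfoc = {q : ℝ × ℝ |
      (q.1 - (a ^ 2 + b ^ 2) / 2) ^ 2 / ((a ^ 2 - b ^ 2) / 2) ^ 2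
        - q.2 ^ 2 / (a * b) ^ 2 = 1}) :
    S '' ({z : ℝ × ℝ | z.1 ^ 2 / a ^ 2 - z.2 ^ 2 / b ^ 2 = 1}
        ∪ {z : ℝ × ℝ | z.1 ^ 2 / b ^ 2 - z.2 ^ 2 / a ^ 2 = 1}) = Hfoc ∧
    S '' {z : ℝ × ℝ | z.1 ^ 2 / a ^ 2 - z.2 ^ 2 / b ^ 2 = 1} =
      {q ∈ Hfoc | 0 < (a ^ 2 - b ^ 2) * (q.1 - (a ^ 2 + b ^ 2) / 2)} ∧
    S '' {z : ℝ × ℝ | z.1 ^ 2 / b ^ 2 - z.2 ^ 2 / a ^ 2 = 1} =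
      {q ∈ Hfoc | (a ^ 2 - b ^ 2) * (q.1 - (a ^ 2 + b ^ 2) / 2) < 0} ∧
    ∀ q ∈ Hfoc,
      |Real.sqrt (q.1 ^ 2 + q.2 ^ 2)
        - Real.sqrt ((q.1 - (a ^ 2 + b ^ 2)) ^ 2 + q.2 ^ 2)| = |a ^ 2 - b ^ 2| := by
  obtain rfl : S = sqMap := hS
  obtain rfl : Hfoc = focusedHyperbola a b := hHfoc
  have hab2 : a ^ 2 ≠ b ^ 2 := fun h => hab ((sq_eq_sq₀ ha.le hb.le).1 h)
  exact ⟨image_sqMap_union_centeredHyperbola ha.ne' hb.ne' hab2,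
    image_sqMap_centeredHyperbola ha.ne' hb.ne' hab2,
    image_sqMap_centeredHyperbola_swap ha.ne' hb.ne' hab2,
    fun q hq => abs_sqrt_sub_sqrt_of_mem_focusedHyperbola ha.ne' hb.ne' hab2 hq⟩
end

section
/- Let a, b > 0, let ε ∈ {1, −1}, and define f(x) := x₁²/a² + ε·x₂²/b² on ℝ². (a) If x and x' both satisfy f(x) = f(x') = 1, then ⟨x − x', ∇f(x) + ∇f(x')⟩ = 0. (b) Consequently, if x ≠ x' are two points with f(x) = f(x') = 1, ∇f(x') ≠ 0, v := x' − x, and v' := v − 2(⟨v, ∇f(x')⟩/‖∇f(x')‖²)·∇f(x') is the elastic reflection of v at the conic {f = 1} at x', then ⟨v, ∇f(x)⟩ = ⟨v', ∇f(x')⟩; i.e., the Joachimsthal quantity −(1/2)⟨v, ∇f(x)⟩ is preserved from one reflection of the free billiard in the conic {f = 1} to the next. -/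
/-!
Since `f` is a quadratic form, `⟨x - x', ∇f x + ∇f x'⟩ = 2 (f x - f x')`, which vanishes on the
conic. An elastic reflection at `x'` negates the component along `∇f x'`, so
`⟨v', ∇f x'⟩ = -⟨v, ∇f x'⟩ = ⟨x - x', ∇f x'⟩`, and by (a) this equals `⟨x' - x, ∇f x⟩ = ⟨v, ∇f x⟩`.
-/

theorem inner_sub_two_smul_self {E : Type*} [NormedAddCommGroup E] [InnerProductSpace ℝ E]
    (v g : E) : inner ℝ (v - (2 * (inner ℝ v g / ‖g‖ ^ 2)) • g) g = -inner ℝ v g := by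
  rcases eq_or_ne g 0 with rfl | hg
  · simp
  · have : ‖g‖ ^ 2 ≠ 0 := by positivity
    rw [inner_sub_left, real_inner_smul_left, real_inner_self_eq_norm_sq]
    field_simp
    ring

theorem Prod.reflect_dot_self (v g : ℝ × ℝ) :
    (v - (2 * ((v.1 * g.1 + v.2 * g.2) / (g.1 ^ 2 + g.2 ^ 2))) • g).1 * g.1
      + (v - (2 * ((v.1 * g.1 + v.2 * g.2) / (g.1 ^ 2 + g.2 ^ 2))) • g).2 * g.2
      = -(v.1 * g.1 + v.2 * g.2) := by
  have h := inner_sub_two_smul_self (WithLp.toLp 2 v) (WithLp.toLp 2 g)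
  simp only [WithLp.prod_inner_apply, RCLike.inner_apply, Real.ringHom_apply,
    WithLp.prod_norm_sq_eq_of_L2, WithLp.toLp_fst, WithLp.toLp_snd, Real.norm_eq_abs, sq_abs,
    ← WithLp.toLp_smul, ← WithLp.toLp_sub] at h
  simp only [Prod.fst_sub, Prod.snd_sub, Prod.smul_fst, Prod.smul_snd, smul_eq_mul] at h ⊢
  linear_combination h

theorem conic_chord_dot_grad_add (a b ε : ℝ) (x x' : ℝ × ℝ) :
    (x.1 - x'.1) * (2 * x.1 / a ^ 2 + 2 * x'.1 / a ^ 2)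
        + (x.2 - x'.2) * (2 * ε * x.2 / b ^ 2 + 2 * ε * x'.2 / b ^ 2)
      = 2 * ((x.1 ^ 2 / a ^ 2 + ε * x.2 ^ 2 / b ^ 2)
        - (x'.1 ^ 2 / a ^ 2 + ε * x'.2 ^ 2 / b ^ 2)) := by
  ring

theorem stmt_14_general (a b ε : ℝ)
    (gradf : ℝ × ℝ → ℝ × ℝ)
    (hgradf : gradf = fun x => (2 * x.1 / a ^ 2, 2 * ε * x.2 / b ^ 2)) :
    (∀ x x' : ℝ × ℝ,
      x.1 ^ 2 / a ^ 2 + ε * x.2 ^ 2 / b ^ 2 = 1 →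
      x'.1 ^ 2 / a ^ 2 + ε * x'.2 ^ 2 / b ^ 2 = 1 →
      (x.1 - x'.1) * ((gradf x).1 + (gradf x').1)
        + (x.2 - x'.2) * ((gradf x).2 + (gradf x').2) = 0) ∧
    (∀ x x' : ℝ × ℝ, x ≠ x' →
      x.1 ^ 2 / a ^ 2 + ε * x.2 ^ 2 / b ^ 2 = 1 →
      x'.1 ^ 2 / a ^ 2 + ε * x'.2 ^ 2 / b ^ 2 = 1 →
      gradf x' ≠ 0 →
      ∀ v v' : ℝ × ℝ, v = x' - x →
      v' = v - (2 * ((v.1 * (gradf x').1 + v.2 * (gradf x').2) /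
              ((gradf x').1 ^ 2 + (gradf x').2 ^ 2))) • gradf x' →
      v.1 * (gradf x).1 + v.2 * (gradf x).2
        = v'.1 * (gradf x').1 + v'.2 * (gradf x').2) := by
  subst hgradf
  have chord : ∀ x x' : ℝ × ℝ,
      x.1 ^ 2 / a ^ 2 + ε * x.2 ^ 2 / b ^ 2 = 1 →
      x'.1 ^ 2 / a ^ 2 + ε * x'.2 ^ 2 / b ^ 2 = 1 →
      (x.1 - x'.1) * (2 * x.1 / a ^ 2 + 2 * x'.1 / a ^ 2)
        + (x.2 - x'.2) * (2 * ε * x.2 / b ^ 2 + 2 * ε * x'.2 / b ^ 2) = 0 := by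
    intro x x' hx hx'
    rw [conic_chord_dot_grad_add, hx, hx', sub_self, mul_zero]
  refine ⟨chord, ?_⟩
  rintro x x' - hx hx' - v v' rfl rfl
  rw [Prod.reflect_dot_self]
  simp only [Prod.fst_sub, Prod.snd_sub]
  linear_combination -chord x x' hx hx'

/-- For the conic `f(x) = x₁²/a² + ε·x₂²/b² = 1` (ε = ±1), with gradient
`∇f(x) = (2x₁/a², 2ε·x₂/b²)`:
(a) any two points `x, x'` on the conic satisfy `⟨x − x', ∇f(x) + ∇f(x')⟩ = 0`;
(b) consequently, if `v = x' − x` is the chord direction and `v'` is its elastic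
reflection at the conic at `x'`, then `⟨v, ∇f(x)⟩ = ⟨v', ∇f(x')⟩`, i.e. the
Joachimsthal quantity `−(1/2)⟨v, ∇f(x)⟩` of the free billiard in the conic is
preserved from one reflection to the next. -/
theorem stmt_14 (a b ε : ℝ) (ha : 0 < a) (hb : 0 < b) (hε : ε = 1 ∨ ε = -1)
    (gradf : ℝ × ℝ → ℝ × ℝ)
    (hgradf : gradf = fun x => (2 * x.1 / a ^ 2, 2 * ε * x.2 / b ^ 2)) :
    (∀ x x' : ℝ × ℝ,
      x.1 ^ 2 / a ^ 2 + ε * x.2 ^ 2 / b ^ 2 = 1 →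
      x'.1 ^ 2 / a ^ 2 + ε * x'.2 ^ 2 / b ^ 2 = 1 →
      (x.1 - x'.1) * ((gradf x).1 + (gradf x').1)
        + (x.2 - x'.2) * ((gradf x).2 + (gradf x').2) = 0) ∧
    (∀ x x' : ℝ × ℝ, x ≠ x' →
      x.1 ^ 2 / a ^ 2 + ε * x.2 ^ 2 / b ^ 2 = 1 →
      x'.1 ^ 2 / a ^ 2 + ε * x'.2 ^ 2 / b ^ 2 = 1 →
      gradf x' ≠ 0 →
      ∀ v v' : ℝ × ℝ, v = x' - x →
      v' = v - (2 * ((v.1 * (gradf x').1 + v.2 * (gradf x').2) /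
              ((gradf x').1 ^ 2 + (gradf x').2 ^ 2))) • gradf x' →
      v.1 * (gradf x).1 + v.2 * (gradf x).2
        = v'.1 * (gradf x').1 + v'.2 * (gradf x').2) :=
  stmt_14_general a b ε gradf hgradf
end
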